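/- Let G be a multiplicative Lie algebra and I an ideal of G. Then the quotient multiplicative Lie algebra G/I is isoclinic to the quotient multiplicative Lie algebra G/(I ∩ ^M[G,G]). -/

import Mathlib

/-!
The projection `G ⧸ (I ∩ ᴹ[G,G]) → G ⧸ I` is a surjective morphism of multiplicative Lie algebras
whose kernel meets the multiplicative commutator trivially, and every such surjection `φ : A → B`
is an isoclinism. Since `⁅a, x⁆`, `a ⋆ x` and `x ⋆ a` all lie in `ᴹ[A,A]`, on which `φ` is
injective, `φ a` is in the multiplicative Lie center of `B` exactly when `a` is in that of `A`;
hence `φ` induces an isomorphism of central quotients, and its restriction to `ᴹ[A,A]` is an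
isomorphism onto `ᴹ[B,B]` compatible with it.
-/

universe u v

open scoped commutatorElement

/-- A multiplicative Lie algebra: a group with an extra binary operation `⋆`
satisfying the Ellis axioms. -/
class MultLieAlgebra (G : Type u) extends Group G where
  lstar : G → G → G
  lstar_self : ∀ g : G, lstar g g = 1
  lstar_mul_right : ∀ g h h' : G, lstar g (h * h') = lstar g h * (h * lstar g h' * h⁻¹)
  lstar_mul_left : ∀ g g' h : G, lstar (g * g') h = (g * lstar g' h * g⁻¹) * lstar g h
  lstar_jacobi : ∀ g h k : G,
      lstar (lstar g h) (h * k * h⁻¹) * lstar (lstar h k) (k * g * k⁻¹) *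
        lstar (lstar k g) (g * h * g⁻¹) = 1
  conj_lstar : ∀ k g h : G, k * lstar g h * k⁻¹ = lstar (k * g * k⁻¹) (k * h * k⁻¹)

namespace MultLieAlgebra

infixl:72 " ⋆ " => MultLieAlgebra.lstar

variable {G : Type u} [MultLieAlgebra G]

lemma one_lstar (x : G) : (1 : G) ⋆ x = 1 := by
  have h := lstar_mul_left (1 : G) 1 x
  simp only [one_mul, inv_one, mul_one] at h
  exact (right_eq_mul.mp h)

lemma lstar_one (x : G) : x ⋆ (1 : G) = 1 := by
  have h := lstar_mul_right x (1 : G) 1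
  simp only [one_mul, inv_one, mul_one] at h
  exact left_eq_mul.mp h

lemma inv_lstar_of_lstar_eq_one {g : G} (hg : ∀ x : G, g ⋆ x = 1) (y : G) : g⁻¹ ⋆ y = 1 := by
  have h := lstar_mul_left g⁻¹ g y
  simp only [inv_mul_cancel, one_lstar, hg, mul_one, inv_inv] at h
  simpa using h.symm

lemma lstar_inv_of_lstar_eq_one {g : G} (hg : ∀ x : G, x ⋆ g = 1) (y : G) : y ⋆ g⁻¹ = 1 := by
  have h := lstar_mul_right y g⁻¹ g
  simp only [inv_mul_cancel, lstar_one, hg, mul_one, inv_inv] at h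
  simpa using h.symm

/-- The multiplicative commutator ideal `ᴹ[G,G]`, generated by all commutators
`⁅a,b⁆` and all values `a ⋆ b`. -/
def mlCommutator (G : Type u) [MultLieAlgebra G] : Subgroup G :=
  Subgroup.closure {x : G | (∃ a b : G, x = ⁅a, b⁆) ∨ ∃ a b : G, x = a ⋆ b}

lemma commutator_mem_mlCommutator (a b : G) : ⁅a, b⁆ ∈ mlCommutator G :=
  Subgroup.subset_closure (Or.inl ⟨a, b, rfl⟩)

lemma lstar_mem_mlCommutator (a b : G) : a ⋆ b ∈ mlCommutator G :=
  Subgroup.subset_closure (Or.inr ⟨a, b, rfl⟩)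

instance mlCommutator_normal : (mlCommutator G).Normal := by
  constructor
  intro n hn g
  induction hn using Subgroup.closure_induction with
  | mem x hx =>
    rcases hx with ⟨a, b, rfl⟩ | ⟨a, b, rfl⟩
    · have : g * ⁅a, b⁆ * g⁻¹ = ⁅g * a * g⁻¹, g * b * g⁻¹⁆ := by
        simp only [commutatorElement_def]; group
      rw [this]; exact commutator_mem_mlCommutator _ _
    · rw [conj_lstar]; exact lstar_mem_mlCommutator _ _
  | one => simpa using one_mem (mlCommutator G)
  | mul x y hx hy ihx ihy =>
    have : g * (x * y) * g⁻¹ = (g * x * g⁻¹) * (g * y * g⁻¹) := by group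
    rw [this]; exact mul_mem ihx ihy
  | inv x hx ihx =>
    have : g * x⁻¹ * g⁻¹ = (g * x * g⁻¹)⁻¹ := by group
    rw [this]; exact inv_mem ihx

/-- The multiplicative Lie center `𝒵(G) = Z(G) ∩ LZ(G)`. -/
def mlCenter (G : Type u) [MultLieAlgebra G] : Subgroup G where
  carrier := {g : G | (∀ x : G, g * x = x * g) ∧ ∀ x : G, g ⋆ x = 1 ∧ x ⋆ g = 1}
  one_mem' := ⟨fun x => by simp, fun x => ⟨one_lstar x, lstar_one x⟩⟩
  mul_mem' := by
    rintro a b ⟨ha₁, ha₂⟩ ⟨hb₁, hb₂⟩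
    refine ⟨fun x => by rw [mul_assoc, hb₁ x, ← mul_assoc, ha₁ x, mul_assoc], fun x => ?_⟩
    constructor
    · rw [lstar_mul_left, (hb₂ x).1, (ha₂ x).1]; simp
    · rw [lstar_mul_right, (ha₂ x).2, (hb₂ x).2]; simp
  inv_mem' := by
    rintro a ⟨ha₁, ha₂⟩
    refine ⟨fun x => by rw [inv_mul_eq_iff_eq_mul, ← mul_assoc, ha₁ x, mul_assoc,
      mul_inv_cancel, mul_one], fun x => ?_⟩
    exact ⟨inv_lstar_of_lstar_eq_one (fun y => (ha₂ y).1) x,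
      lstar_inv_of_lstar_eq_one (fun y => (ha₂ y).2) x⟩

lemma mem_mlCenter_iff {g : G} :
    g ∈ mlCenter G ↔ (∀ x : G, g * x = x * g) ∧ ∀ x : G, g ⋆ x = 1 ∧ x ⋆ g = 1 :=
  Iff.rfl

instance mlCenter_normal : (mlCenter G).Normal := by
  constructor
  intro n hn g
  have h : g * n * g⁻¹ = n := by rw [← hn.1 g]; group
  rw [h]; exact hn

/-- An isoclinism between two multiplicative Lie algebras. -/
structure Isoclinism (G : Type u) (H : Type v) [MultLieAlgebra G] [MultLieAlgebra H] where
  lam : (G ⧸ mlCenter G) ≃* (H ⧸ mlCenter H)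
  mu : mlCommutator G ≃* mlCommutator H
  map_commutator : ∀ (g g' : G) (h h' : H),
    lam (QuotientGroup.mk g) = QuotientGroup.mk h →
    lam (QuotientGroup.mk g') = QuotientGroup.mk h' →
    (mu ⟨⁅g, g'⁆, commutator_mem_mlCommutator g g'⟩ : H) = ⁅h, h'⁆
  map_lstar : ∀ (g g' : G) (h h' : H),
    lam (QuotientGroup.mk g) = QuotientGroup.mk h →
    lam (QuotientGroup.mk g') = QuotientGroup.mk h' →
    (mu ⟨g ⋆ g', lstar_mem_mlCommutator g g'⟩ : H) = h ⋆ h'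

/-- Two multiplicative Lie algebras are isoclinic if there is an isoclinism between them. -/
def Isoclinic (G : Type u) (H : Type v) [MultLieAlgebra G] [MultLieAlgebra H] : Prop :=
  Nonempty (Isoclinism G H)

/-- Componentwise multiplicative Lie algebra structure on a binary product. -/
instance instProd (G : Type u) (H : Type v) [MultLieAlgebra G] [MultLieAlgebra H] :
    MultLieAlgebra (G × H) where
  lstar a b := (a.1 ⋆ b.1, a.2 ⋆ b.2)
  lstar_self a := by ext <;> simp [lstar_self]
  lstar_mul_right a b c := by ext <;> simp [lstar_mul_right]
  lstar_mul_left a b c := by ext <;> simp [lstar_mul_left]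
  lstar_jacobi a b c := by ext <;> simp [lstar_jacobi]
  conj_lstar k a b := by ext <;> simp [← conj_lstar]

/-- Componentwise multiplicative Lie algebra structure on a Pi type. -/
instance instPi {ι : Type v} (f : ι → Type u) [∀ i, MultLieAlgebra (f i)] :
    MultLieAlgebra (∀ i, f i) where
  lstar a b := fun i => a i ⋆ b i
  lstar_self a := by funext i; simp [lstar_self]
  lstar_mul_right a b c := by funext i; simp [lstar_mul_right]
  lstar_mul_left a b c := by funext i; simp [lstar_mul_left]
  lstar_jacobi a b c := by funext i; simp [lstar_jacobi]
  conj_lstar k a b := by funext i; simp [← conj_lstar]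

/-- The trivial multiplicative Lie algebra structure on the one-element group. -/
instance instPUnit : MultLieAlgebra PUnit.{u+1} where
  lstar _ _ := 1
  lstar_self _ := rfl
  lstar_mul_right _ _ _ := rfl
  lstar_mul_left _ _ _ := rfl
  lstar_jacobi _ _ _ := rfl
  conj_lstar _ _ _ := rfl

/-- A subalgebra of a multiplicative Lie algebra: a subgroup closed under `⋆`. -/
structure MLSubalgebra (G : Type u) [MultLieAlgebra G] extends Subgroup G where
  lstar_mem' : ∀ {a b : G}, a ∈ carrier → b ∈ carrier → a ⋆ b ∈ carrier

/-- A subalgebra is a multiplicative Lie algebra with the restricted operations. -/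
instance instSubalgebra (H : MLSubalgebra G) : MultLieAlgebra H.toSubgroup where
  lstar a b := ⟨(a : G) ⋆ (b : G), H.lstar_mem' a.2 b.2⟩
  lstar_self a := Subtype.ext (lstar_self (a : G))
  lstar_mul_right a b c := Subtype.ext (lstar_mul_right (a : G) b c)
  lstar_mul_left a b c := Subtype.ext (lstar_mul_left (a : G) b c)
  lstar_jacobi a b c := Subtype.ext (lstar_jacobi (a : G) b c)
  conj_lstar k a b := Subtype.ext (conj_lstar (k : G) a b)

lemma mul_center_lstar {z : G} (hz : z ∈ mlCenter G) (g y : G) : (g * z) ⋆ y = g ⋆ y := by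
  rw [lstar_mul_left, (hz.2 y).1]
  simp

lemma lstar_mul_center {z : G} (hz : z ∈ mlCenter G) (g y : G) : y ⋆ (g * z) = y ⋆ g := by
  rw [lstar_mul_right, (hz.2 y).2]
  simp

/-- The subalgebra `H·𝒵(G)` generated by a subalgebra `H` and the multiplicative
Lie center of `G`. -/
def MLSubalgebra.centerJoin (H : MLSubalgebra G) : MLSubalgebra G where
  carrier := {x : G | ∃ h ∈ H.carrier, ∃ z ∈ mlCenter G, x = h * z}
  one_mem' := ⟨1, H.toSubgroup.one_mem, 1, one_mem _, by simp⟩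
  mul_mem' := by
    rintro x y ⟨h, hh, z, hz, rfl⟩ ⟨h', hh', z', hz', rfl⟩
    refine ⟨h * h', H.toSubgroup.mul_mem hh hh', z * z', mul_mem hz hz', ?_⟩
    rw [mul_assoc, ← mul_assoc z h' z', hz.1 h', mul_assoc, ← mul_assoc, ← mul_assoc]
  inv_mem' := by
    rintro x ⟨h, hh, z, hz, rfl⟩
    refine ⟨h⁻¹, H.toSubgroup.inv_mem hh, z⁻¹, inv_mem hz, ?_⟩
    rw [mul_inv_rev, (inv_mem hz).1 h⁻¹]
  lstar_mem' := by
    rintro x y ⟨h, hh, z, hz, rfl⟩ ⟨h', hh', z', hz', rfl⟩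
    exact ⟨h ⋆ h', H.lstar_mem' hh hh', 1, one_mem _, by
      rw [mul_center_lstar hz, lstar_mul_center hz', mul_one]⟩

/-- An ideal of a multiplicative Lie algebra: a normal subgroup `I` with
`g ⋆ i ∈ I` and `i ⋆ g ∈ I` for all `g ∈ G`, `i ∈ I`. -/
structure MLIdeal (G : Type u) [MultLieAlgebra G] extends Subgroup G where
  conj_mem' : ∀ n : G, n ∈ carrier → ∀ g : G, g * n * g⁻¹ ∈ carrier
  lstar_mem_left' : ∀ (g : G) {i : G}, i ∈ carrier → g ⋆ i ∈ carrier
  lstar_mem_right' : ∀ (g : G) {i : G}, i ∈ carrier → i ⋆ g ∈ carrier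

instance MLIdeal.normal (I : MLIdeal G) : I.toSubgroup.Normal := ⟨I.conj_mem'⟩

/-- An ideal is in particular a subalgebra. -/
def MLIdeal.toMLSubalgebra (I : MLIdeal G) : MLSubalgebra G :=
  { I.toSubgroup with lstar_mem' := fun {a _} _ hb => I.lstar_mem_left' a hb }

lemma MLIdeal.lstar_congr (I : MLIdeal G) {a a' b b' : G}
    (ha : a⁻¹ * a' ∈ I.toSubgroup) (hb : b⁻¹ * b' ∈ I.toSubgroup) :
    (a ⋆ b)⁻¹ * (a' ⋆ b') ∈ I.toSubgroup := by
  obtain ⟨i, hi, rfl⟩ : ∃ i ∈ I.toSubgroup, a' = a * i :=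
    ⟨a⁻¹ * a', ha, by group⟩
  obtain ⟨j, hj, rfl⟩ : ∃ j ∈ I.toSubgroup, b' = b * j :=
    ⟨b⁻¹ * b', hb, by group⟩
  have h1 : (a * i) ⋆ (b * j) = (a * (i ⋆ (b * j)) * a⁻¹) * (a ⋆ (b * j)) :=
    lstar_mul_left a i (b * j)
  have h2 : a ⋆ (b * j) = (a ⋆ b) * (b * (a ⋆ j) * b⁻¹) := lstar_mul_right a b j
  rw [h1, h2]
  have hu : a * (i ⋆ (b * j)) * a⁻¹ ∈ I.toSubgroup :=
    I.conj_mem' _ (I.lstar_mem_right' _ hi) a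
  have hv : b * (a ⋆ j) * b⁻¹ ∈ I.toSubgroup :=
    I.conj_mem' _ (I.lstar_mem_left' _ hj) b
  have : (a ⋆ b)⁻¹ * (a * (i ⋆ (b * j)) * a⁻¹ * ((a ⋆ b) * (b * (a ⋆ j) * b⁻¹))) =
      ((a ⋆ b)⁻¹ * (a * (i ⋆ (b * j)) * a⁻¹) * (a ⋆ b)) * (b * (a ⋆ j) * b⁻¹) := by
    group
  rw [this]
  exact mul_mem (Subgroup.Normal.conj_mem' I.normal _ hu _) hv

/-- The quotient of a multiplicative Lie algebra by an ideal. -/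
instance instQuotient (I : MLIdeal G) : MultLieAlgebra (G ⧸ I.toSubgroup) where
  lstar := Quotient.map₂ (· ⋆ ·) (by
    intro a a' ha b b' hb
    have ha' : a⁻¹ * a' ∈ I.toSubgroup := QuotientGroup.leftRel_apply.mp ha
    have hb' : b⁻¹ * b' ∈ I.toSubgroup := QuotientGroup.leftRel_apply.mp hb
    exact QuotientGroup.leftRel_apply.mpr (I.lstar_congr ha' hb'))
  lstar_self x := Quotient.inductionOn x fun a => congrArg QuotientGroup.mk (lstar_self a)
  lstar_mul_right x y z := Quotient.inductionOn₃ x y z fun a b c =>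
    congrArg QuotientGroup.mk (lstar_mul_right a b c)
  lstar_mul_left x y z := Quotient.inductionOn₃ x y z fun a b c =>
    congrArg QuotientGroup.mk (lstar_mul_left a b c)
  lstar_jacobi x y z := Quotient.inductionOn₃ x y z fun a b c =>
    congrArg QuotientGroup.mk (lstar_jacobi a b c)
  conj_lstar x y z := Quotient.inductionOn₃ x y z fun a b c =>
    congrArg QuotientGroup.mk (conj_lstar a b c)

lemma quot_lstar (I : MLIdeal G) (a b : G) :
    (QuotientGroup.mk (a ⋆ b) : G ⧸ I.toSubgroup) = QuotientGroup.mk a ⋆ QuotientGroup.mk b :=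
  rfl

/-- The ideal `I ∩ ᴹ[G,G]`. -/
def MLIdeal.infCommutator (I : MLIdeal G) : MLIdeal G where
  carrier := {x : G | x ∈ I.toSubgroup ∧ x ∈ mlCommutator G}
  one_mem' := ⟨one_mem _, one_mem _⟩
  mul_mem' := fun ha hb => ⟨mul_mem ha.1 hb.1, mul_mem ha.2 hb.2⟩
  inv_mem' := fun ha => ⟨inv_mem ha.1, inv_mem ha.2⟩
  conj_mem' := fun n hn g =>
    ⟨I.conj_mem' n hn.1 g, Subgroup.Normal.conj_mem mlCommutator_normal n hn.2 g⟩
  lstar_mem_left' := by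
    intro g i hi
    exact ⟨I.lstar_mem_left' g hi.1, lstar_mem_mlCommutator _ _⟩
  lstar_mem_right' := by
    intro g i hi
    exact ⟨I.lstar_mem_right' g hi.1, lstar_mem_mlCommutator _ _⟩

/-- A multiplicative Lie algebra isomorphism is a group isomorphism preserving `⋆`. -/
def IsMLAEquiv {G : Type u} {H : Type v} [MultLieAlgebra G] [MultLieAlgebra H]
    (e : G ≃* H) : Prop :=
  ∀ a b : G, e (a ⋆ b) = e a ⋆ e b

/-- A witness that `G` and `H` arise as quotients of a common multiplicative Lie
algebra `K` by ideals `ZG`, `ZH`, with `G ∼ K ∼ H` (Theorem on common ancestors). -/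
structure CommonQuotientWitness (G : Type u) (H : Type u)
    [MultLieAlgebra G] [MultLieAlgebra H] where
  K : Type u
  [instK : MultLieAlgebra K]
  ZG : MLIdeal K
  ZH : MLIdeal K
  isoG : G ≃* (K ⧸ ZH.toSubgroup)
  isoG_lstar : IsMLAEquiv isoG
  isoH : H ≃* (K ⧸ ZG.toSubgroup)
  isoH_lstar : IsMLAEquiv isoH
  isoclinicGK : Isoclinic G K
  isoclinicKH : Isoclinic K H

/-- A witness that `G` and `H` embed as ideals of a common multiplicative Lie algebra
`K̃`, each isoclinic to `K̃` (common isoclinic descendant). -/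
structure CommonIdealWitness (G : Type u) (H : Type u)
    [MultLieAlgebra G] [MultLieAlgebra H] where
  K : Type u
  [instK : MultLieAlgebra K]
  KG : MLIdeal K
  KH : MLIdeal K
  isoG : G ≃* KG.toMLSubalgebra.toSubgroup
  isoG_lstar : IsMLAEquiv isoG
  isoH : H ≃* KH.toMLSubalgebra.toSubgroup
  isoH_lstar : IsMLAEquiv isoH
  isoclinicG : Isoclinic (KG.toMLSubalgebra.toSubgroup) K
  isoclinicH : Isoclinic (KH.toMLSubalgebra.toSubgroup) K

/-- A witness of a stem multiplicative Lie algebra isoclinic to `G`. -/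
structure StemWitness (G : Type u) [MultLieAlgebra G] where
  H : Type u
  [instH : MultLieAlgebra H]
  stem : mlCenter H ≤ mlCommutator H
  isoclinic : Isoclinic G H

lemma mem_mlCenter_iff_forall {g : G} :
    g ∈ mlCenter G ↔ ∀ x : G, ⁅g, x⁆ = 1 ∧ g ⋆ x = 1 ∧ x ⋆ g = 1 := by
  simp only [mem_mlCenter_iff, commutatorElement_eq_one_iff_mul_comm, forall_and]

lemma commutatorElement_mul_mlCenter_left {z : G} (hz : z ∈ mlCenter G) (g x : G) :
    ⁅g * z, x⁆ = ⁅g, x⁆ := by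
  rw [commutatorElement_def, commutatorElement_def, mul_assoc g z x, hz.1 x]
  group

lemma commutatorElement_mul_mlCenter_right {z : G} (hz : z ∈ mlCenter G) (g x : G) :
    ⁅x, g * z⁆ = ⁅x, g⁆ := by
  rw [← commutatorElement_inv, commutatorElement_mul_mlCenter_left hz, commutatorElement_inv]

lemma commutatorElement_eq_of_mk_eq {g g' h h' : G}
    (hh : (g : G ⧸ mlCenter G) = h) (hh' : (g' : G ⧸ mlCenter G) = h') :
    ⁅g, g'⁆ = ⁅h, h'⁆ := by
  rw [QuotientGroup.eq] at hh hh'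
  rw [← mul_inv_cancel_left g h, ← mul_inv_cancel_left g' h',
    commutatorElement_mul_mlCenter_left hh, commutatorElement_mul_mlCenter_right hh']

lemma lstar_eq_of_mk_eq {g g' h h' : G}
    (hh : (g : G ⧸ mlCenter G) = h) (hh' : (g' : G ⧸ mlCenter G) = h') :
    g ⋆ g' = h ⋆ h' := by
  rw [QuotientGroup.eq] at hh hh'
  rw [← mul_inv_cancel_left g h, ← mul_inv_cancel_left g' h', mul_center_lstar hh,
    lstar_mul_center hh']

section Isoclinism

variable {A : Type u} {B : Type v} [MultLieAlgebra A] [MultLieAlgebra B]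

def Isoclinism.symm (e : Isoclinism A B) : Isoclinism B A where
  lam := e.lam.symm
  mu := e.mu.symm
  map_commutator b b' a a' ha ha' := by
    rw [MulEquiv.symm_apply_eq] at ha ha'
    have h : e.mu ⟨⁅a, a'⁆, commutator_mem_mlCommutator a a'⟩ =
        ⟨⁅b, b'⁆, commutator_mem_mlCommutator b b'⟩ :=
      Subtype.ext (e.map_commutator a a' b b' ha.symm ha'.symm)
    rw [← h, MulEquiv.symm_apply_apply]
  map_lstar b b' a a' ha ha' := by
    rw [MulEquiv.symm_apply_eq] at ha ha'
    have h : e.mu ⟨a ⋆ a', lstar_mem_mlCommutator a a'⟩ =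
        ⟨b ⋆ b', lstar_mem_mlCommutator b b'⟩ :=
      Subtype.ext (e.map_lstar a a' b b' ha.symm ha'.symm)
    rw [← h, MulEquiv.symm_apply_apply]

theorem Isoclinic.symm : Isoclinic A B → Isoclinic B A
  | ⟨e⟩ => ⟨e.symm⟩

def IsMLAHom (φ : A →* B) : Prop :=
  ∀ a b : A, φ (a ⋆ b) = φ a ⋆ φ b

variable {φ : A →* B}

theorem IsMLAHom.map_mlCommutator (hφ : IsMLAHom φ) (hsurj : Function.Surjective φ) :
    (mlCommutator A).map φ = mlCommutator B := by
  rw [mlCommutator, mlCommutator, MonoidHom.map_closure]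
  congr 1
  ext y
  constructor
  · rintro ⟨x, ⟨a, b, rfl⟩ | ⟨a, b, rfl⟩, rfl⟩
    exacts [Or.inl ⟨φ a, φ b, map_commutatorElement φ a b⟩, Or.inr ⟨φ a, φ b, hφ a b⟩]
  · rintro (⟨a, b, rfl⟩ | ⟨a, b, rfl⟩) <;>
      obtain ⟨a, rfl⟩ := hsurj a <;> obtain ⟨b, rfl⟩ := hsurj b
    exacts [⟨⁅a, b⁆, Or.inl ⟨a, b, rfl⟩, map_commutatorElement φ a b⟩,
      ⟨a ⋆ b, Or.inr ⟨a, b, rfl⟩, hφ a b⟩]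

theorem IsMLAHom.map_mem_mlCenter_iff (hφ : IsMLAHom φ) (hsurj : Function.Surjective φ)
    (hker : Disjoint φ.ker (mlCommutator A)) (a : A) :
    φ a ∈ mlCenter B ↔ a ∈ mlCenter A := by
  have map_eq_one_iff {m : A} (hm : m ∈ mlCommutator A) : φ m = 1 ↔ m = 1 :=
    ⟨fun h => Subgroup.disjoint_def.mp hker h hm, fun h => h ▸ map_one φ⟩
  simp only [mem_mlCenter_iff_forall, hsurj.forall, ← map_commutatorElement, ← hφ _ _,
    map_eq_one_iff (commutator_mem_mlCommutator _ _), map_eq_one_iff (lstar_mem_mlCommutator _ _)]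

theorem IsMLAHom.isoclinic (hφ : IsMLAHom φ) (hsurj : Function.Surjective φ)
    (hker : Disjoint φ.ker (mlCommutator A)) : Isoclinic A B := by
  have hcenter : mlCenter A = ((QuotientGroup.mk' (mlCenter B)).comp φ).ker := by
    ext a
    rw [MonoidHom.mem_ker, MonoidHom.comp_apply, QuotientGroup.mk'_apply,
      QuotientGroup.eq_one_iff, hφ.map_mem_mlCenter_iff hsurj hker]
  have hinj : Function.Injective (φ.subgroupMap (mlCommutator A)) := by
    rw [injective_iff_map_eq_one]
    rintro ⟨m, hm⟩ h
    exact Subtype.ext (Subgroup.disjoint_def.mp hker (congrArg Subtype.val h) hm)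
  exact ⟨{
    lam := (QuotientGroup.quotientMulEquivOfEq hcenter).trans
      (QuotientGroup.quotientKerEquivOfSurjective _ ((QuotientGroup.mk'_surjective _).comp hsurj))
    mu := (MulEquiv.ofBijective _ ⟨hinj, φ.subgroupMap_surjective _⟩).trans
      (MulEquiv.subgroupCongr (hφ.map_mlCommutator hsurj))
    map_commutator := fun a a' _ _ hb hb' =>
      (map_commutatorElement φ a a').trans (commutatorElement_eq_of_mk_eq hb hb')
    map_lstar := fun a a' _ _ hb hb' => (hφ a a').trans (lstar_eq_of_mk_eq hb hb') }⟩

end Isoclinism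

theorem isMLAHom_quotientMap {I J : MLIdeal G} (hJI : J.toSubgroup ≤ I.toSubgroup) :
    IsMLAHom (QuotientGroup.map J.toSubgroup I.toSubgroup (MonoidHom.id G) hJI) :=
  fun x y => QuotientGroup.induction_on x fun _ => QuotientGroup.induction_on y fun _ => rfl

theorem disjoint_ker_quotientMap_mlCommutator {I J : MLIdeal G}
    (hJI : J.toSubgroup ≤ I.toSubgroup) (hIJ : I.toSubgroup ⊓ mlCommutator G ≤ J.toSubgroup) :
    Disjoint (QuotientGroup.map J.toSubgroup I.toSubgroup (MonoidHom.id G) hJI).ker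
      (mlCommutator (G ⧸ J.toSubgroup)) := by
  have hmk : IsMLAHom (QuotientGroup.mk' J.toSubgroup) := fun _ _ => rfl
  rw [Subgroup.disjoint_def]
  intro x hx hxM
  rw [← hmk.map_mlCommutator (QuotientGroup.mk'_surjective _)] at hxM
  obtain ⟨m, hm, rfl⟩ := hxM
  have hmI : m ∈ I.toSubgroup := (QuotientGroup.eq_one_iff m).mp hx
  exact (QuotientGroup.eq_one_iff m).mpr (hIJ ⟨hmI, hm⟩)

theorem isoclinic_quotient_of_le {I J : MLIdeal G} (hJI : J.toSubgroup ≤ I.toSubgroup)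
    (hIJ : I.toSubgroup ⊓ mlCommutator G ≤ J.toSubgroup) :
    Isoclinic (G ⧸ J.toSubgroup) (G ⧸ I.toSubgroup) :=
  (isMLAHom_quotientMap hJI).isoclinic
    (QuotientGroup.map_surjective_of_surjective _ _ _ QuotientGroup.mk_surjective hJI)
    (disjoint_ker_quotientMap_mlCommutator hJI hIJ)

/-- For an ideal `I` of `G`, `G ⧸ I` is isoclinic to
`G ⧸ (I ∩ ᴹ[G,G])`. -/
theorem quotient_isoclinic_quotient_infCommutator {G : Type u} [MultLieAlgebra G]
    (I : MLIdeal G) :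
    Isoclinic (G ⧸ I.toSubgroup) (G ⧸ I.infCommutator.toSubgroup) :=
  (isoclinic_quotient_of_le (J := I.infCommutator) (fun _ hx => hx.1) fun _ hx => hx).symm

end MultLieAlgebra
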